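/- Finite model property for MB+: if an MB+-formula A is not valid, then there exists an MB-realization (S,R,P,V) with S a finite set such that A is not valid in it (i.e., s ∉ V(A) for some s ∈ S). -/
import Mathlib


set_option maxHeartbeats 1000000

namespace MBQL

/-- The fixed finite set `J ⊆ [0,1]` of inner-product values, with `0, 1 ∈ J`. -/
structure MBParams where
  J : Set ℝ
  finite : J.Finite
  subI : J ⊆ Set.Icc (0:ℝ) 1
  zero_mem : (0:ℝ) ∈ J
  one_mem : (1:ℝ) ∈ J

/-- Formulas of **MB+**: generated from variables, `⊤`, `⊥` by `¬`, `∧` and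
the modalities `□^=_α` (`α ∈ J`, `0 < α ≤ 1`), `□^o_α` (`α ∈ J`) and `□^c_0`. -/
inductive MBPForm (Pm : MBParams) : Type
  | var : ℕ → MBPForm Pm
  | top : MBPForm Pm
  | bot : MBPForm Pm
  | neg : MBPForm Pm → MBPForm Pm
  | conj : MBPForm Pm → MBPForm Pm → MBPForm Pm
  | boxe : (α : ℝ) → α ∈ Pm.J → 0 < α → MBPForm Pm → MBPForm Pm
  | boxo : (α : ℝ) → α ∈ Pm.J → MBPForm Pm → MBPForm Pm
  | boxc0 : MBPForm Pm → MBPForm Pm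

noncomputable instance {Pm : MBParams} : DecidableEq (MBPForm Pm) := Classical.decEq _

/-- Valuation of an MB+-formula, given worlds `S`, a relation `R` and a
valuation `V` of the propositional variables. -/
def MBPForm.valR {Pm : MBParams} {S : Type} (R : S → S → ℝ) (V : ℕ → Set S) :
    MBPForm Pm → Set S
  | .var n => V n
  | .top => Set.univ
  | .bot => ∅
  | .neg A => (A.valR R V)ᶜ
  | .conj A B => A.valR R V ∩ B.valR R V
  | .boxe α _ _ A => {s | ∀ u, R s u = α → u ∈ A.valR R V}
  | .boxo α _ A => {s | ∀ u, α < R s u → u ∈ A.valR R V}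
  | .boxc0 A => {s | ∀ u, u ∈ A.valR R V}

/-- An EQL-frame. -/
structure EQLFrame where
  S : Type
  nonempty : Nonempty S
  R : S → S → ℝ
  mem_Icc : ∀ s t, R s t ∈ Set.Icc (0:ℝ) 1
  eq_one_iff : ∀ s t, (R s t = 1 ↔ s = t)
  symm : ∀ s t, R s t = R t s

/-- An MB-realization for the language of MB+. -/
structure MBPRealization (Pm : MBParams) where
  F : EQLFrame
  P : Set (Set F.S)
  univ_mem : Set.univ ∈ P
  empty_mem : ∅ ∈ P
  inter_mem : ∀ X ∈ P, ∀ Y ∈ P, X ∩ Y ∈ P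
  compl_mem : ∀ X ∈ P, Xᶜ ∈ P
  boxe_mem : ∀ α ∈ Pm.J, 0 < α → ∀ X ∈ P, {s | ∀ u, F.R s u = α → u ∈ X} ∈ P
  boxo_mem : ∀ α ∈ Pm.J, ∀ X ∈ P, {s | ∀ u, α < F.R s u → u ∈ X} ∈ P
  boxc0_mem : ∀ X ∈ P, {s | ∀ u, u ∈ X} ∈ P
  V : ℕ → Set F.S
  V_mem : ∀ n, V n ∈ P

/-- The extended valuation in an MB+-realization. -/
def MBPRealization.val {Pm : MBParams} (M : MBPRealization Pm) (A : MBPForm Pm) :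
    Set M.F.S := A.valR M.F.R M.V

/-- Validity of an MB+-formula. -/
def MBPValid {Pm : MBParams} (A : MBPForm Pm) : Prop :=
  ∀ (M : MBPRealization Pm) (s : M.F.S), s ∈ M.val A

/-- Bracket labels for nested-sequents of MB+: `[·]^=_α` (`0 < α ≤ 1`),
`[·]^o_α` (`α ≠ 1`) and `[·]^c_0`. -/
inductive PLab (Pm : MBParams) : Type
  | eq : (α : ℝ) → α ∈ Pm.J → 0 < α → PLab Pm
  | o : (α : ℝ) → α ∈ Pm.J → α ≠ 1 → PLab Pm
  | c0 : PLab Pm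

mutual
/-- Nested-sequents of MB+. -/
inductive PNSeq (Pm : MBParams) : Type
  | node : Finset (MBPForm Pm) → Finset (MBPForm Pm) → PNSeqs Pm → PNSeq Pm
/-- A finite list of labelled child nested-sequents of MB+. -/
inductive PNSeqs (Pm : MBParams) : Type
  | nil : PNSeqs Pm
  | cons : PLab Pm → PNSeq Pm → PNSeqs Pm → PNSeqs Pm
end

/-- The `i`-th labelled child. -/
def PNSeqs.get {Pm : MBParams} : PNSeqs Pm → ℕ → Option (PLab Pm × PNSeq Pm)
  | .nil, _ => none
  | .cons l t _, 0 => some (l, t)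
  | .cons _ _ ts, n+1 => ts.get n

/-- `PSubAt t p u`: the subtree of `t` at the node address `p` is `u`. -/
inductive PSubAt {Pm : MBParams} : PNSeq Pm → List ℕ → PNSeq Pm → Prop
  | here (t : PNSeq Pm) : PSubAt t [] t
  | there {Γ Δ : Finset (MBPForm Pm)} {ts : PNSeqs Pm} {i : ℕ} {l : PLab Pm}
      {u v : PNSeq Pm} {p : List ℕ} :
      PNSeqs.get ts i = some (l, u) → PSubAt u p v → PSubAt (.node Γ Δ ts) (i :: p) v

mutual
/-- Replace the sequent at the node with address `p` by `Γ' ⇒ Δ'`. -/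
def PNSeq.setSeq {Pm : MBParams} :
    PNSeq Pm → List ℕ → Finset (MBPForm Pm) → Finset (MBPForm Pm) → PNSeq Pm
  | .node _ _ ts, [], Γ', Δ' => .node Γ' Δ' ts
  | .node Γ Δ ts, i :: p, Γ', Δ' => .node Γ Δ (PNSeqs.setSeqs ts i p Γ' Δ')
def PNSeqs.setSeqs {Pm : MBParams} :
    PNSeqs Pm → ℕ → List ℕ → Finset (MBPForm Pm) → Finset (MBPForm Pm) → PNSeqs Pm
  | .nil, _, _, _, _ => .nil
  | .cons l t ts, 0, p, Γ', Δ' => .cons l (t.setSeq p Γ' Δ') ts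
  | .cons l t ts, n+1, p, Γ', Δ' => .cons l t (PNSeqs.setSeqs ts n p Γ' Δ')
end

/-- Append a labelled child at the end of a children list. -/
def PNSeqs.snoc {Pm : MBParams} : PNSeqs Pm → PLab Pm → PNSeq Pm → PNSeqs Pm
  | .nil, l, u => .cons l u .nil
  | .cons l' t ts, l, u => .cons l' t (ts.snoc l u)

mutual
/-- Add a new child `[u]_l` at the node with address `p`. -/
def PNSeq.addChild {Pm : MBParams} : PNSeq Pm → List ℕ → PLab Pm → PNSeq Pm → PNSeq Pm
  | .node Γ Δ ts, [], l, u => .node Γ Δ (ts.snoc l u)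
  | .node Γ Δ ts, i :: p, l, u => .node Γ Δ (PNSeqs.addChilds ts i p l u)
def PNSeqs.addChilds {Pm : MBParams} :
    PNSeqs Pm → ℕ → List ℕ → PLab Pm → PNSeq Pm → PNSeqs Pm
  | .nil, _, _, _, _ => .nil
  | .cons l' t ts, 0, p, l, u => .cons l' (t.addChild p l u) ts
  | .cons l' t ts, n+1, p, l, u => .cons l' t (PNSeqs.addChilds ts n p l u)
end

/-- `A ∨ B`. -/
def MBPForm.or {Pm : MBParams} (A B : MBPForm Pm) : MBPForm Pm :=
  .neg (.conj (.neg A) (.neg B))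

/-- `A → B := ¬A ∨ B`. -/
def MBPForm.imp {Pm : MBParams} (A B : MBPForm Pm) : MBPForm Pm := (MBPForm.neg A).or B

/-- Conjunction of a list of formulas. -/
def pconjList {Pm : MBParams} : List (MBPForm Pm) → MBPForm Pm
  | [] => .top
  | [A] => A
  | A :: B :: rest => .conj A (pconjList (B :: rest))

/-- Disjunction of a list of formulas. -/
def pdisjList {Pm : MBParams} : List (MBPForm Pm) → MBPForm Pm
  | [] => .bot
  | [A] => A
  | A :: B :: rest => (A).or (pdisjList (B :: rest))

/-- `⋀Γ → ⋁Δ`. -/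
noncomputable def pseqForm {Pm : MBParams} (Γ Δ : Finset (MBPForm Pm)) : MBPForm Pm :=
  (pconjList Γ.toList).imp (pdisjList Δ.toList)

/-- The box corresponding to a bracket label of MB+. -/
def PLab.box {Pm : MBParams} : PLab Pm → MBPForm Pm → MBPForm Pm
  | .eq α h h0, A => .boxe α h h0 A
  | .o α h _, A => .boxo α h A
  | .c0, A => .boxc0 A

mutual
/-- The interpretation `τ` of an MB+ nested-sequent as an MB+-formula. -/
noncomputable def PNSeq.tau {Pm : MBParams} : PNSeq Pm → MBPForm Pm
  | .node Γ Δ ts => PNSeqs.tauAux (pseqForm Γ Δ) ts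
noncomputable def PNSeqs.tauAux {Pm : MBParams} : MBPForm Pm → PNSeqs Pm → MBPForm Pm
  | A, .nil => A
  | A, .cons l t ts => PNSeqs.tauAux (A.or (l.box t.tau)) ts
end

/-- The condition imposed on `R(E(n₁), E(n₂))` by a bracket label of MB+. -/
def PLabCond {Pm : MBParams} (l : PLab Pm) (r : ℝ) : Prop :=
  match l with
  | .eq α _ _ => r = α
  | .o α _ _ => α < r
  | .c0 => True

/-- `E` is an embedding of the MB+ nested-sequent `t` into `M`. -/
def PIsEmb {Pm : MBParams} (M : MBPRealization Pm) (t : PNSeq Pm)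
    (E : List ℕ → M.F.S) : Prop :=
  ∀ p Γ Δ ts i l u, PSubAt t p (.node Γ Δ ts) → PNSeqs.get ts i = some (l, u) →
    PLabCond l (M.F.R (E p) (E (p ++ [i])))

/-- The MB+ nested-sequent `t` is false in `M` under `E`. -/
def PFalseUnder {Pm : MBParams} (M : MBPRealization Pm) (t : PNSeq Pm)
    (E : List ℕ → M.F.S) : Prop :=
  ∀ p Γ Δ ts, PSubAt t p (.node Γ Δ ts) →
    (∀ A ∈ Γ, E p ∈ M.val A) ∧ (∀ A ∈ Δ, E p ∉ M.val A)

/-- Validity of an MB+ nested-sequent. -/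
def PNSValid {Pm : MBParams} (t : PNSeq Pm) : Prop :=
  ∀ (M : MBPRealization Pm) (E : List ℕ → M.F.S), PIsEmb M t E → ¬ PFalseUnder M t E

/-- Descriptors of the left-rule boxes `□^=_α`, `□^o_α` of MB+. -/
inductive PBox (Pm : MBParams) : Type
  | e : (α : ℝ) → α ∈ Pm.J → 0 < α → PBox Pm
  | o : (α : ℝ) → α ∈ Pm.J → PBox Pm

/-- The box formula corresponding to a box descriptor. -/
def PBox.box {Pm : MBParams} : PBox Pm → MBPForm Pm → MBPForm Pm
  | .e α h h0, A => .boxe α h h0 A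
  | .o α h, A => .boxo α h A

/-- Side condition of the rules (□L), (□L sym) of NSMB+:
`(d = d' = "=" and α = β)`, or `(d = d' = o and α < β)`, or
`(d = o, d' = "=" and α < β)`. -/
def PC1 {Pm : MBParams} : PBox Pm → PLab Pm → Prop
  | .e α _ _, .eq β _ _ => α = β
  | .o α _, .o β _ _ => α < β
  | .o α _, .eq β _ _ => α < β
  | _, _ => False

/-- Side condition of the rule (□L self) of NSMB+:
`(d = "=" and α = 1)` or `(d = o and α ≠ 1)`. -/
def PC2 {Pm : MBParams} : PBox Pm → Prop
  | .e α _ _ => α = 1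
  | .o α _ => α ≠ 1

/-- Provability in the nested-sequent calculus **NSMB+**; the boolean records
whether (cut) may be used. -/
inductive PProvable {Pm : MBParams} : Bool → PNSeq Pm → Prop
  /-- axiom `‖A, Γ ⇒ Δ, A, T‖` -/
  | axId {cut : Bool} {t : PNSeq Pm} {p Γ Δ ts A} :
      PSubAt t p (.node Γ Δ ts) → A ∈ Γ → A ∈ Δ → PProvable cut t
  /-- axiom `‖Γ ⇒ Δ, ⊤, T‖` -/
  | axTop {cut : Bool} {t : PNSeq Pm} {p Γ Δ ts} :
      PSubAt t p (.node Γ Δ ts) → MBPForm.top ∈ Δ → PProvable cut t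
  /-- axiom `‖⊥, Γ ⇒ Δ, T‖` -/
  | axBot {cut : Bool} {t : PNSeq Pm} {p Γ Δ ts} :
      PSubAt t p (.node Γ Δ ts) → MBPForm.bot ∈ Γ → PProvable cut t
  /-- axiom `‖Γ ⇒ Δ, □^o_1 A, T‖` -/
  | axBoxO1 {cut : Bool} {t : PNSeq Pm} {p Γ Δ ts A} :
      PSubAt t p (.node Γ Δ ts) → MBPForm.boxo 1 Pm.one_mem A ∈ Δ → PProvable cut t
  /-- rule (cut) -/
  | cutR {t : PNSeq Pm} {p Γ Δ ts A} :
      PSubAt t p (.node Γ Δ ts) →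
      PProvable true (t.setSeq p Γ (insert A Δ)) →
      PProvable true (t.setSeq p (insert A Γ) Δ) →
      PProvable true t
  /-- rule (wL) -/
  | wL {cut : Bool} {t : PNSeq Pm} {p Γ Δ ts A} :
      PSubAt t p (.node Γ Δ ts) → PProvable cut t →
      PProvable cut (t.setSeq p (insert A Γ) Δ)
  /-- rule (wR) -/
  | wR {cut : Bool} {t : PNSeq Pm} {p Γ Δ ts A} :
      PSubAt t p (.node Γ Δ ts) → PProvable cut t →
      PProvable cut (t.setSeq p Γ (insert A Δ))
  /-- rule (¬L) -/
  | negL {cut : Bool} {t : PNSeq Pm} {p Γ Δ ts A} :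
      PSubAt t p (.node Γ Δ ts) →
      PProvable cut (t.setSeq p Γ (insert A Δ)) →
      PProvable cut (t.setSeq p (insert (MBPForm.neg A) Γ) Δ)
  /-- rule (¬R) -/
  | negR {cut : Bool} {t : PNSeq Pm} {p Γ Δ ts A} :
      PSubAt t p (.node Γ Δ ts) →
      PProvable cut (t.setSeq p (insert A Γ) Δ) →
      PProvable cut (t.setSeq p Γ (insert (MBPForm.neg A) Δ))
  /-- rule (∧L) -/
  | andL {cut : Bool} {t : PNSeq Pm} {p Γ Δ ts A B} :
      PSubAt t p (.node Γ Δ ts) →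
      PProvable cut (t.setSeq p (insert A (insert B Γ)) Δ) →
      PProvable cut (t.setSeq p (insert (MBPForm.conj A B) Γ) Δ)
  /-- rule (∧R) -/
  | andR {cut : Bool} {t : PNSeq Pm} {p Γ Δ ts A B} :
      PSubAt t p (.node Γ Δ ts) →
      PProvable cut (t.setSeq p Γ (insert A Δ)) →
      PProvable cut (t.setSeq p Γ (insert B Δ)) →
      PProvable cut (t.setSeq p Γ (insert (MBPForm.conj A B) Δ))
  /-- rule (□L) of NSMB+ -/
  | boxL {cut : Bool} {t : PNSeq Pm} {p Γ Δ ts i l u Γ' Δ' ts' A} {b : PBox Pm} :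
      PSubAt t p (.node Γ Δ ts) → PNSeqs.get ts i = some (l, u) →
      PSubAt t (p ++ [i]) (.node Γ' Δ' ts') →
      PC1 b l →
      PProvable cut (t.setSeq (p ++ [i]) (insert A Γ') Δ') →
      PProvable cut (t.setSeq p (insert (b.box A) Γ) Δ)
  /-- rule (□L sym) of NSMB+ -/
  | boxLsym {cut : Bool} {t : PNSeq Pm} {p Γ Δ ts i l u Γ' Δ' ts' A} {b : PBox Pm} :
      PSubAt t p (.node Γ Δ ts) → PNSeqs.get ts i = some (l, u) →
      PSubAt t (p ++ [i]) (.node Γ' Δ' ts') →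
      PC1 b l →
      PProvable cut (t.setSeq p (insert A Γ) Δ) →
      PProvable cut (t.setSeq (p ++ [i]) (insert (b.box A) Γ') Δ')
  /-- rule (□L self) of NSMB+ -/
  | boxLself {cut : Bool} {t : PNSeq Pm} {p Γ Δ ts A} {b : PBox Pm} :
      PSubAt t p (.node Γ Δ ts) → PC2 b →
      PProvable cut (t.setSeq p (insert A Γ) Δ) →
      PProvable cut (t.setSeq p (insert (b.box A) Γ) Δ)
  /-- rule (□^c_0) -/
  | boxC0 {cut : Bool} {t : PNSeq Pm} {p Γ Δ ts q Γ'' Δ'' ts'' A} :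
      PSubAt t p (.node Γ Δ ts) → PSubAt t q (.node Γ'' Δ'' ts'') →
      PProvable cut (t.setSeq p (insert A Γ) Δ) →
      PProvable cut (t.setSeq q (insert (MBPForm.boxc0 A) Γ'') Δ'')
  /-- rule (□R) -/
  | boxR {cut : Bool} {t : PNSeq Pm} {p Γ Δ ts A} {l : PLab Pm} :
      PSubAt t p (.node Γ Δ ts) →
      PProvable cut (t.addChild p l (.node ∅ {A} .nil)) →
      PProvable cut (t.setSeq p Γ (insert (l.box A) Δ))
  /-- rule (= R self) -/
  | eqRself {cut : Bool} {t : PNSeq Pm} {p Γ Δ ts A} :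
      PSubAt t p (.node Γ Δ ts) →
      PProvable cut (t.setSeq p Γ (insert A Δ)) →
      PProvable cut (t.setSeq p Γ (insert (MBPForm.boxe 1 Pm.one_mem one_pos A) Δ))


noncomputable section FMP

open Classical

variable {Pm : MBParams}

/-- Subformulas. -/
def subf : MBPForm Pm → Finset (MBPForm Pm)
  | .var n => {.var n}
  | .top => {.top}
  | .bot => {.bot}
  | .neg B => insert (.neg B) (subf B)
  | .conj B C => insert (.conj B C) (subf B ∪ subf C)
  | .boxe α h h0 B => insert (.boxe α h h0 B) (subf B)
  | .boxo α h B => insert (.boxo α h B) (subf B)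
  | .boxc0 B => insert (.boxc0 B) (subf B)

lemma mem_subf_self (B : MBPForm Pm) : B ∈ subf B := by
  cases B <;> simp [subf]

lemma subf_trans : ∀ B C : MBPForm Pm, C ∈ subf B → subf C ⊆ subf B := by
  intro B
  induction B with
  | var n => intro C hC; simp [subf] at hC; subst hC; simp [subf]
  | top => intro C hC; simp [subf] at hC; subst hC; simp [subf]
  | bot => intro C hC; simp [subf] at hC; subst hC; simp [subf]
  | neg B ih =>
      intro C hC
      rcases Finset.mem_insert.mp hC with h | h
      · subst h; exact subset_rfl
      · exact (ih C h).trans (Finset.subset_insert _ _)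
  | conj B1 B2 ih1 ih2 =>
      intro C hC
      rcases Finset.mem_insert.mp hC with h | h
      · subst h; exact subset_rfl
      · rcases Finset.mem_union.mp h with h | h
        · exact (ih1 C h).trans ((Finset.subset_union_left).trans (Finset.subset_insert _ _))
        · exact (ih2 C h).trans ((Finset.subset_union_right).trans (Finset.subset_insert _ _))
  | boxe α hα h0 B ih =>
      intro C hC
      rcases Finset.mem_insert.mp hC with h | h
      · subst h; exact subset_rfl
      · exact (ih C h).trans (Finset.subset_insert _ _)
  | boxo α hα B ih =>
      intro C hC
      rcases Finset.mem_insert.mp hC with h | h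
      · subst h; exact subset_rfl
      · exact (ih C h).trans (Finset.subset_insert _ _)
  | boxc0 B ih =>
      intro C hC
      rcases Finset.mem_insert.mp hC with h | h
      · subst h; exact subset_rfl
      · exact (ih C h).trans (Finset.subset_insert _ _)

/-- The condition on `R s u` triggered by a box. -/
def bcond : MBPForm Pm → ℝ → Prop
  | .boxe α _ _ _, r => r = α
  | .boxo α _ _, r => α < r
  | .boxc0 _, _ => True
  | _, _ => False

/-- The body of a box. -/
def bbody : MBPForm Pm → MBPForm Pm
  | .boxe _ _ _ B => B
  | .boxo _ _ B => B
  | .boxc0 B => B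
  | C => C

/-- Box formulas. -/
def IsBoxF : MBPForm Pm → Prop
  | .boxe _ _ _ _ => True
  | .boxo _ _ _ => True
  | .boxc0 _ => True
  | _ => False

lemma bbody_mem_subf {A C : MBPForm Pm} (hb : IsBoxF C) (hC : C ∈ subf A) :
    bbody C ∈ subf A := by
  cases C with
  | boxe α hα h0 B => exact subf_trans A _ hC (by simp [subf, bbody, mem_subf_self])
  | boxo α hα B => exact subf_trans A _ hC (by simp [subf, bbody, mem_subf_self])
  | boxc0 B => exact subf_trans A _ hC (by simp [subf, bbody, mem_subf_self])
  | var n => exact absurd hb (by simp [IsBoxF])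
  | top => exact absurd hb (by simp [IsBoxF])
  | bot => exact absurd hb (by simp [IsBoxF])
  | neg B => exact absurd hb (by simp [IsBoxF])
  | conj B1 B2 => exact absurd hb (by simp [IsBoxF])

lemma valR_box_iff {S : Type} (R : S → S → ℝ) (V : ℕ → Set S)
    (C : MBPForm Pm) (hb : IsBoxF C) (s : S) :
    s ∈ C.valR R V ↔ ∀ u, bcond C (R s u) → u ∈ (bbody C).valR R V := by
  cases C with
  | boxe α hα h0 B => simp [MBPForm.valR, bcond, bbody]
  | boxo α hα B => simp [MBPForm.valR, bcond, bbody]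
  | boxc0 B => simp [MBPForm.valR, bcond, bbody]
  | var n => exact absurd hb (by simp [IsBoxF])
  | top => exact absurd hb (by simp [IsBoxF])
  | bot => exact absurd hb (by simp [IsBoxF])
  | neg B => exact absurd hb (by simp [IsBoxF])
  | conj B1 B2 => exact absurd hb (by simp [IsBoxF])

variable (A : MBPForm Pm) (M : MBPRealization Pm)

lemma valM_box_iff (C : MBPForm Pm) (hb : IsBoxF C) (s : M.F.S) :
    s ∈ M.val C ↔ ∀ u, bcond C (M.F.R s u) → u ∈ M.val (bbody C) :=
  valR_box_iff M.F.R M.V C hb s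

/-- The type of a world: the set of subformulas of `A` true at it. -/
def TypeOf (s : M.F.S) : Finset (MBPForm Pm) :=
  (subf A).filter (fun B => s ∈ M.val B)

lemma mem_TypeOf {B : MBPForm Pm} (hB : B ∈ subf A) (s : M.F.S) :
    B ∈ TypeOf A M s ↔ s ∈ M.val B := by
  simp [TypeOf, Finset.mem_filter, hB]

/-- Worlds of the finite model. -/
def FW : Type :=
  Fin 3 × {C : MBPForm Pm // C ∈ subf A} ×
    {τ : Finset (MBPForm Pm) // ∃ s : M.F.S, TypeOf A M s = τ}

instance : Finite (FW A M) := by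
  have h2 : Finite {τ : Finset (MBPForm Pm) // ∃ s : M.F.S, TypeOf A M s = τ} := by
    have hfin : {τ : Finset (MBPForm Pm) | ∃ s : M.F.S, TypeOf A M s = τ}.Finite := by
      apply Set.Finite.subset ((subf A).powerset.finite_toSet)
      rintro τ ⟨s, rfl⟩
      simp only [Finset.coe_powerset, Set.mem_preimage, Set.mem_powerset_iff,
        Finset.coe_subset]
      exact Finset.filter_subset _ _
    exact hfin.to_subtype
  exact Finite.instProd

/-- The M-world represented by a node. -/
def wrd (p : FW A M) : M.F.S := p.2.2.2.choose

lemma TypeOf_wrd (p : FW A M) : TypeOf A M (wrd A M p) = p.2.2.1 :=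
  p.2.2.2.choose_spec

/-- A witness for the falsity of box `C`, other than the world itself. -/
def WitEx (p : FW A M) (C : MBPForm Pm) : Prop :=
  ∃ u : M.F.S, bcond C (M.F.R (wrd A M p) u) ∧ u ∉ M.val (bbody C) ∧ u ≠ wrd A M p

/-- The chosen witness. -/
def wit (p : FW A M) (C : MBPForm Pm) : M.F.S :=
  if h : WitEx A M p C then h.choose else wrd A M p

lemma wit_spec {p : FW A M} {C : MBPForm Pm} (h : WitEx A M p C) :
    bcond C (M.F.R (wrd A M p) (wit A M p C)) ∧
      wit A M p C ∉ M.val (bbody C) ∧ wit A M p C ≠ wrd A M p := by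
  rw [wit, dif_pos h]; exact h.choose_spec

/-- The target node of the witness edge for box `C` at `p`. -/
def target (p : FW A M) (C : MBPForm Pm) (hC : C ∈ subf A) : FW A M :=
  (p.1 + 1, ⟨C, hC⟩, ⟨TypeOf A M (wit A M p C), ⟨wit A M p C, rfl⟩⟩)

/-- `p` demands a witness edge to `q`. -/
def Dem (p q : FW A M) : Prop :=
  ∃ C : MBPForm Pm, ∃ hC : C ∈ subf A, WitEx A M p C ∧ q = target A M p C hC

lemma Dem_fst {p q : FW A M} (h : Dem A M p q) : q.1 = p.1 + 1 := by
  obtain ⟨C, hC, _, rfl⟩ := h; rfl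

lemma Dem_asymm {p q : FW A M} (h1 : Dem A M p q) (h2 : Dem A M q p) : False := by
  have e1 := Dem_fst A M h1
  have e2 := Dem_fst A M h2
  rw [e1] at e2
  have h3 : ∀ x : Fin 3, ¬ x = x + 1 + 1 := by decide
  exact h3 p.1 e2

lemma Dem_ne {p q : FW A M} (h : Dem A M p q) : p ≠ q := by
  intro he
  have h1 := Dem_fst A M h
  rw [← he] at h1
  have h3 : ∀ x : Fin 3, ¬ x = x + 1 := by decide
  exact h3 p.1 h1

lemma Dem_col {p q : FW A M} (h : Dem A M p q) :
    WitEx A M p q.2.1.1 ∧ TypeOf A M (wrd A M q) = TypeOf A M (wit A M p q.2.1.1) := by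
  obtain ⟨C, hC, hw, rfl⟩ := h
  exact ⟨hw, TypeOf_wrd A M _⟩

/-- The relation of the finite model. -/
def R0 (p q : FW A M) : ℝ :=
  if p = q then 1
  else if Dem A M p q then M.F.R (wrd A M p) (wit A M p q.2.1.1)
  else if Dem A M q p then M.F.R (wrd A M q) (wit A M q p.2.1.1)
  else 0

lemma R0_symm (p q : FW A M) : R0 A M p q = R0 A M q p := by
  rw [R0, R0]
  by_cases h : p = q
  · subst h; simp
  · rw [if_neg h, if_neg (Ne.symm h)]
    by_cases h1 : Dem A M p q
    · rw [if_pos h1, if_neg (fun h2 => Dem_asymm A M h1 h2), if_pos h1]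
    · rw [if_neg h1]
      by_cases h2 : Dem A M q p
      · rw [if_pos h2, if_pos h2]
      · rw [if_neg h2, if_neg h2, if_neg h1]

lemma R0_mem_Icc (p q : FW A M) : R0 A M p q ∈ Set.Icc (0:ℝ) 1 := by
  rw [R0]
  split_ifs with h h1 h2
  · norm_num
  · exact M.F.mem_Icc _ _
  · exact M.F.mem_Icc _ _
  · norm_num

lemma R0_eq_one (p q : FW A M) : R0 A M p q = 1 ↔ p = q := by
  rw [R0]
  split_ifs with h h1 h2
  · simp [h]
  · constructor
    · intro he
      have hw := (Dem_col A M h1).1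
      exact absurd ((M.F.eq_one_iff _ _).mp he).symm (wit_spec A M hw).2.2
    · intro he; exact absurd he h
  · constructor
    · intro he
      have hw := (Dem_col A M h2).1
      exact absurd ((M.F.eq_one_iff _ _).mp he).symm (wit_spec A M hw).2.2
    · intro he; exact absurd (he.symm) (Ne.symm h)
  · constructor
    · intro he; norm_num at he
    · intro he; exact absurd he h

/-- Valuation of variables in the finite model. -/
def V0 (n : ℕ) : Set (FW A M) := {p | wrd A M p ∈ M.V n}

lemma R_self_one (s : M.F.S) : M.F.R s s = 1 := (M.F.eq_one_iff s s).mpr rfl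

/-- Edge soundness. -/
lemma sound (p q : FW A M) {C : MBPForm Pm} (hC : C ∈ subf A) (hb : IsBoxF C)
    (h1 : wrd A M p ∈ M.val C) (h2 : bcond C (R0 A M p q)) :
    wrd A M q ∈ M.val (bbody C) := by
  have hsem := (valM_box_iff M C hb (wrd A M p)).mp h1
  have hBsub : bbody C ∈ subf A := bbody_mem_subf hb hC
  rw [R0] at h2
  split_ifs at h2 with h h' h''
  · subst h
    exact hsem (wrd A M p) (by rw [R_self_one]; exact h2)
  · obtain ⟨hw, hty⟩ := Dem_col A M h'
    have hu := hsem _ h2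
    rw [← mem_TypeOf A M hBsub, ← hty, mem_TypeOf A M hBsub] at hu
    exact hu
  · obtain ⟨hw, hty⟩ := Dem_col A M h''
    have hCu : wit A M q p.2.1.1 ∈ M.val C := by
      rw [← mem_TypeOf A M hC, ← hty, mem_TypeOf A M hC]
      exact h1
    have hsem' := (valM_box_iff M C hb _).mp hCu
    exact hsem' (wrd A M q) (by rw [M.F.symm]; exact h2)
  · cases C with
    | boxe α hα h0 B =>
        exfalso
        have h2' : (0:ℝ) = α := h2
        linarith
    | boxo α hα B =>
        exfalso
        have h0 : (0:ℝ) ≤ α := (Pm.subI hα).1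
        have h2' : α < (0:ℝ) := h2
        linarith
    | boxc0 B => exact hsem (wrd A M q) trivial
    | var n => exact absurd hb (by simp [IsBoxF])
    | top => exact absurd hb (by simp [IsBoxF])
    | bot => exact absurd hb (by simp [IsBoxF])
    | neg B => exact absurd hb (by simp [IsBoxF])
    | conj B1 B2 => exact absurd hb (by simp [IsBoxF])

/-- Truth lemma, box case. -/
lemma truth_box (C : MBPForm Pm) (hb : IsBoxF C) (hC : C ∈ subf A)
    (ih : ∀ p : FW A M,
      p ∈ (bbody C).valR (R0 A M) (V0 A M) ↔ bbody C ∈ TypeOf A M (wrd A M p))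
    (p : FW A M) :
    p ∈ C.valR (R0 A M) (V0 A M) ↔ C ∈ TypeOf A M (wrd A M p) := by
  have hBsub : bbody C ∈ subf A := bbody_mem_subf hb hC
  rw [valR_box_iff (R0 A M) (V0 A M) C hb, mem_TypeOf A M hC]
  constructor
  · intro hall
    by_contra hnot
    rw [valM_box_iff M C hb] at hnot
    push_neg at hnot
    obtain ⟨u, hcu, hub⟩ := hnot
    by_cases hu : u = wrd A M p
    · have h1 : bcond C (R0 A M p p) := by
        have he : R0 A M p p = 1 := by rw [R0, if_pos rfl]
        rw [he]
        rw [hu, R_self_one] at hcu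
        exact hcu
      have h2 := hall p h1
      rw [ih p, mem_TypeOf A M hBsub] at h2
      rw [hu] at hub
      exact hub h2
    · have hw : WitEx A M p C := ⟨u, hcu, hub, hu⟩
      have hd : Dem A M p (target A M p C hC) := ⟨C, hC, hw, rfl⟩
      have hne := Dem_ne A M hd
      have hr : R0 A M p (target A M p C hC) = M.F.R (wrd A M p) (wit A M p C) := by
        rw [R0, if_neg hne, if_pos hd]
        rfl
      have hspec := wit_spec A M hw
      have h2 := hall (target A M p C hC) (by rw [hr]; exact hspec.1)
      rw [ih _] at h2
      have hty : TypeOf A M (wrd A M (target A M p C hC)) = TypeOf A M (wit A M p C) :=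
        TypeOf_wrd A M _
      rw [hty, mem_TypeOf A M hBsub] at h2
      exact hspec.2.1 h2
  · intro hval q hq
    rw [ih q, mem_TypeOf A M hBsub]
    exact sound A M p q hC hb hval hq

/-- Truth lemma. -/
lemma truth : ∀ C : MBPForm Pm, C ∈ subf A → ∀ p : FW A M,
    p ∈ C.valR (R0 A M) (V0 A M) ↔ C ∈ TypeOf A M (wrd A M p) := by
  intro C
  induction C with
  | var n =>
      intro hC p
      rw [mem_TypeOf A M hC]
      exact Iff.rfl
  | top =>
      intro hC p
      rw [mem_TypeOf A M hC]
      simp [MBPForm.valR, MBPRealization.val]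
  | bot =>
      intro hC p
      rw [mem_TypeOf A M hC]
      simp [MBPForm.valR, MBPRealization.val]
  | neg B ih =>
      intro hC p
      have hB : B ∈ subf A :=
        subf_trans A _ hC (by simp [subf, mem_subf_self])
      rw [mem_TypeOf A M hC]
      have : (p ∈ (MBPForm.neg B).valR (R0 A M) (V0 A M)) ↔
          ¬ p ∈ B.valR (R0 A M) (V0 A M) := Iff.rfl
      rw [this, ih hB p, mem_TypeOf A M hB]
      exact Iff.rfl
  | conj B1 B2 ih1 ih2 =>
      intro hC p
      have hB1 : B1 ∈ subf A :=
        subf_trans A _ hC (by simp [subf]; right; left; exact mem_subf_self B1)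
      have hB2 : B2 ∈ subf A :=
        subf_trans A _ hC (by simp [subf]; right; right; exact mem_subf_self B2)
      rw [mem_TypeOf A M hC]
      have : (p ∈ (MBPForm.conj B1 B2).valR (R0 A M) (V0 A M)) ↔
          (p ∈ B1.valR (R0 A M) (V0 A M) ∧ p ∈ B2.valR (R0 A M) (V0 A M)) := Iff.rfl
      rw [this, ih1 hB1 p, ih2 hB2 p, mem_TypeOf A M hB1, mem_TypeOf A M hB2]
      exact Iff.rfl
  | boxe α hα h0 B ih =>
      intro hC p
      have hB : B ∈ subf A := subf_trans A _ hC (by simp [subf, mem_subf_self])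
      exact truth_box A M (MBPForm.boxe α hα h0 B) trivial hC (fun q => ih hB q) p
  | boxo α hα B ih =>
      intro hC p
      have hB : B ∈ subf A := subf_trans A _ hC (by simp [subf, mem_subf_self])
      exact truth_box A M (MBPForm.boxo α hα B) trivial hC (fun q => ih hB q) p
  | boxc0 B ih =>
      intro hC p
      have hB : B ∈ subf A := subf_trans A _ hC (by simp [subf, mem_subf_self])
      exact truth_box A M (MBPForm.boxc0 B) trivial hC (fun q => ih hB q) p

end FMP

/-- Finite model property for MB+: if an MB+-formula `A` is
not valid, then there is a realization with a finite set of worlds in which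
`A` is not valid. -/
theorem finite_model_property_MBplus {Pm : MBParams} (A : MBPForm Pm)
    (h : ¬ MBPValid A) :
    ∃ M : MBPRealization Pm, Finite M.F.S ∧ ∃ s : M.F.S, s ∉ M.val A := by
  rw [MBPValid] at h
  push_neg at h
  obtain ⟨M, s, hs⟩ := h
  have hA : A ∈ subf A := mem_subf_self A
  let root : FW A M := (0, ⟨A, hA⟩, ⟨TypeOf A M s, ⟨s, rfl⟩⟩)
  let F0 : EQLFrame :=
    { S := FW A M
      nonempty := ⟨root⟩
      R := R0 A M
      mem_Icc := R0_mem_Icc A M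
      eq_one_iff := R0_eq_one A M
      symm := R0_symm A M }
  let M0 : MBPRealization Pm :=
    { F := F0
      P := Set.univ
      univ_mem := trivial
      empty_mem := trivial
      inter_mem := fun _ _ _ _ => trivial
      compl_mem := fun _ _ => trivial
      boxe_mem := fun _ _ _ _ _ => trivial
      boxo_mem := fun _ _ _ _ => trivial
      boxc0_mem := fun _ _ => trivial
      V := V0 A M
      V_mem := fun _ => trivial }
  refine ⟨M0, inferInstanceAs (Finite (FW A M)), root, ?_⟩
  intro hmem
  have h1 := (truth A M A hA root).mp hmem
  have h2 : TypeOf A M (wrd A M root) = TypeOf A M s := TypeOf_wrd A M root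
  rw [h2, mem_TypeOf A M hA] at h1
  exact hs h1

end MBQL
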